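/- For the modified-realizability instantiation of the exponential (||!A||ˣ := !∀y ||A||ˣ_y, with empty challenge tuple), the interpretation of the °-translation of every intuitionistic formula A is 'self-banging': the equivalence ||A°||ˣ ⊸⊸ !||A°||ˣ is derivable in ILLᵇ, where ° is the translation with: atomic A ↦ !A, ⊥ ↦ 0, ∧ ↦ ⊗, ∨ ↦ ⊕, (A→B) ↦ !(A° ⊸ B°), ∀ ↦ !∀, ∃ ↦ ∃. -/
import Mathlib


inductive IFml (D : Type) : Type where
  | atom : ℕ → List D → IFml D
  | bot : IFml D
  | and : IFml D → IFml D → IFml D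
  | or : IFml D → IFml D → IFml D
  | imp : IFml D → IFml D → IFml D
  | uni : (D → IFml D) → IFml D
  | exi : (D → IFml D) → IFml D

inductive LFml (D : Type) : Type 1 where
  | atom : ℕ → List D → LFml D
  | beq : Bool → Bool → LFml D
  | zero : LFml D
  | tensor : LFml D → LFml D → LFml D
  | limp : LFml D → LFml D → LFml D
  | wth : LFml D → LFml D → LFml D
  | oplus : LFml D → LFml D → LFml D
  | bang : LFml D → LFml D
  | uni : (α : Type) → (α → LFml D) → LFml D
  | exi : (α : Type) → (α → LFml D) → LFml D

/-- The verifying system ILLᵇ: intuitionistic linear logic with boolean axioms. -/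
inductive Deriv {D : Type} : List (LFml D) → LFml D → Prop where
  | id : ∀ (A : LFml D), Deriv [A] A
  | exch : ∀ {Γ Δ : List (LFml D)} {A : LFml D}, List.Perm Γ Δ → Deriv Γ A → Deriv Δ A
  | cut : ∀ {Γ Δ : List (LFml D)} {A B : LFml D}, Deriv Γ A → Deriv (A :: Δ) B → Deriv (Γ ++ Δ) B
  | zeroL : ∀ (Γ : List (LFml D)) (A : LFml D), Deriv (LFml.zero :: Γ) A
  | tensorR : ∀ {Γ Δ : List (LFml D)} {A B : LFml D}, Deriv Γ A → Deriv Δ B → Deriv (Γ ++ Δ) (LFml.tensor A B)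
  | tensorL : ∀ {Γ : List (LFml D)} {A B C : LFml D}, Deriv (A :: B :: Γ) C → Deriv (LFml.tensor A B :: Γ) C
  | limpR : ∀ {Γ : List (LFml D)} {A B : LFml D}, Deriv (A :: Γ) B → Deriv Γ (LFml.limp A B)
  | limpL : ∀ {Γ Δ : List (LFml D)} {A B C : LFml D}, Deriv Γ A → Deriv (B :: Δ) C → Deriv (LFml.limp A B :: (Γ ++ Δ)) C
  | withR : ∀ {Γ : List (LFml D)} {A B : LFml D}, Deriv Γ A → Deriv Γ B → Deriv Γ (LFml.wth A B)
  | withL₁ : ∀ {Γ : List (LFml D)} {A B C : LFml D}, Deriv (A :: Γ) C → Deriv (LFml.wth A B :: Γ) C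
  | withL₂ : ∀ {Γ : List (LFml D)} {A B C : LFml D}, Deriv (B :: Γ) C → Deriv (LFml.wth A B :: Γ) C
  | oplusR₁ : ∀ {Γ : List (LFml D)} {A B : LFml D}, Deriv Γ A → Deriv Γ (LFml.oplus A B)
  | oplusR₂ : ∀ {Γ : List (LFml D)} {A B : LFml D}, Deriv Γ B → Deriv Γ (LFml.oplus A B)
  | oplusL : ∀ {Γ : List (LFml D)} {A B C : LFml D}, Deriv (A :: Γ) C → Deriv (B :: Γ) C → Deriv (LFml.oplus A B :: Γ) C
  | contr : ∀ {Γ : List (LFml D)} {A B : LFml D}, Deriv (LFml.bang A :: LFml.bang A :: Γ) B → Deriv (LFml.bang A :: Γ) B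
  | weak : ∀ {Γ : List (LFml D)} {A B : LFml D}, Deriv Γ B → Deriv (LFml.bang A :: Γ) B
  | bangR : ∀ {Γ : List (LFml D)} {A : LFml D}, Deriv (Γ.map LFml.bang) A → Deriv (Γ.map LFml.bang) (LFml.bang A)
  | bangL : ∀ {Γ : List (LFml D)} {A B : LFml D}, Deriv (A :: Γ) B → Deriv (LFml.bang A :: Γ) B
  | uniR : ∀ {Γ : List (LFml D)} (α : Type) (A : α → LFml D), (∀ a, Deriv Γ (A a)) → Deriv Γ (LFml.uni α A)
  | uniL : ∀ {Γ : List (LFml D)} {B : LFml D} (α : Type) (A : α → LFml D) (t : α), Deriv (A t :: Γ) B → Deriv (LFml.uni α A :: Γ) B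
  | exiR : ∀ {Γ : List (LFml D)} (α : Type) (A : α → LFml D) (t : α), Deriv Γ (A t) → Deriv Γ (LFml.exi α A)
  | exiL : ∀ {Γ : List (LFml D)} {B : LFml D} (α : Type) (A : α → LFml D), (∀ a, Deriv (A a :: Γ) B) → Deriv (LFml.exi α A :: Γ) B
  | axRefl : ∀ (a : Bool), Deriv [] (LFml.bang (LFml.beq a a))
  | axNeq : ∀ (a b : Bool), a ≠ b → Deriv [] (LFml.limp (LFml.bang (LFml.beq a b)) LFml.zero)

def biimp {D : Type} (A B : LFml D) : LFml D := LFml.wth (LFml.limp A B) (LFml.limp B A)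

/-- Witness types of the modified-realizability interpretation of A°
(the challenge tuples are empty). -/
def Wm {D : Type} : IFml D → Type
  | .atom _ _ => PUnit
  | .bot => PUnit
  | .and A B => Wm A × Wm B
  | .or A B => (Wm A × Wm B) × Bool
  | .imp A B => Wm A → Wm B
  | .uni A => ∀ d, Wm (A d)
  | .exi A => (d : D) × Wm (A d)

/-- The modified-realizability interpretation ||A°||ˣ of the °-translation
(atomic A ↦ !A, ⊥ ↦ 0, ∧ ↦ ⊗, ∨ ↦ ⊕, (A→B) ↦ !(A° ⊸ B°), ∀ ↦ !∀, ∃ ↦ ∃),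
with the exponential interpreted as ||!P||ˣ := !∀y ||P||ˣ_y. -/
def matM {D : Type} : (A : IFml D) → Wm A → LFml D
  | .atom n v, _ => LFml.bang (LFml.atom n v)
  | .bot, _ => LFml.zero
  | .and A B, w => LFml.tensor (matM A w.1) (matM B w.2)
  | .or A B, w =>
      LFml.wth (LFml.limp (LFml.bang (LFml.beq w.2 true)) (matM A w.1.1))
               (LFml.limp (LFml.bang (LFml.beq w.2 false)) (matM B w.1.2))
  | .imp A B, g => LFml.bang (LFml.uni (Wm A) (fun x => LFml.limp (matM A x) (matM B (g x))))
  | .uni A, f => LFml.bang (LFml.uni D (fun d => matM (A d) (f d)))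
  | .exi A, w => matM (A w.1) w.2

namespace Stmt19Aux

open LFml

lemma cut1 {D : Type} {A B C : LFml D} (h1 : Deriv [A] B) (h2 : Deriv [B] C) :
    Deriv [A] C := by
  have := Deriv.cut (Δ := []) h1 h2
  simpa using this

lemma derelict {D : Type} (A : LFml D) : Deriv [bang A] A := Deriv.bangL (Deriv.id A)

lemma falsum {D : Type} (a b : Bool) (h : a ≠ b) (B : LFml D) :
    Deriv [bang (beq a b)] B := by
  have h1 : Deriv [limp (bang (beq a b)) zero, bang (beq a b)] B :=
    Deriv.limpL (Δ := []) (Deriv.id _) (Deriv.zeroL [] B)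
  have := Deriv.cut (Γ := []) (Deriv.axNeq a b h) h1
  simpa using this

lemma selfbang {D : Type} : ∀ (A : IFml D) (x : Wm A),
    Deriv [matM A x] (LFml.bang (matM A x)) := by
  intro A
  induction A with
  | atom n v =>
    intro x
    have : Deriv ([LFml.atom n v].map bang) (bang (bang (LFml.atom n v))) :=
      Deriv.bangR (Deriv.id _)
    simpa [matM] using this
  | bot =>
    intro x
    simpa [matM] using Deriv.zeroL ([] : List (LFml D)) (bang zero)
  | and A B ihA ihB =>
    intro x
    set A' := matM A x.1 with hA'
    set B' := matM B x.2 with hB'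
    have hten : Deriv [A', B'] (tensor A' B') := by
      have := Deriv.tensorR (Deriv.id A') (Deriv.id B')
      simpa using this
    have hb : Deriv ([A', B'].map bang) (tensor A' B') := by
      have s1 : Deriv [B', A'] (tensor A' B') := Deriv.exch (List.Perm.swap _ _ _) hten
      have s2 : Deriv [bang B', A'] (tensor A' B') := Deriv.bangL s1
      have s3 : Deriv [A', bang B'] (tensor A' B') := Deriv.exch (List.Perm.swap _ _ _) s2
      simpa using Deriv.bangL s3
    have hbr : Deriv [bang A', bang B'] (bang (tensor A' B')) := by
      simpa using Deriv.bangR (Γ := [A', B']) hb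
    have c1 : Deriv [A', bang B'] (bang (tensor A' B')) := by
      have := Deriv.cut (Δ := [bang B']) (ihA x.1) hbr
      simpa using this
    have c2 : Deriv [B', A'] (bang (tensor A' B')) := by
      have e : Deriv [bang B', A'] (bang (tensor A' B')) :=
        Deriv.exch (List.Perm.swap _ _ _) c1
      have := Deriv.cut (Δ := [A']) (ihB x.2) e
      simpa using this
    have c3 : Deriv [A', B'] (bang (tensor A' B')) :=
      Deriv.exch (List.Perm.swap _ _ _) c2
    simpa [matM] using Deriv.tensorL (Γ := []) c3
  | or A B ihA ihB =>
    intro x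
    obtain ⟨⟨a, b⟩, z⟩ := x
    set A' := matM A a with hA'
    set B' := matM B b with hB'
    cases z with
    | true =>
      set C := wth (limp (bang (beq true true)) A') (limp (bang (beq true false)) B') with hC
      have h1 : Deriv [C] A' := by
        have : Deriv [limp (bang (beq true true)) A'] A' := by
          have := Deriv.limpL (Γ := []) (Δ := []) (Deriv.axRefl true) (Deriv.id A')
          simpa using this
        exact Deriv.withL₁ this
      have h2 : Deriv [C] (bang A') := cut1 h1 (ihA a)
      have h3 : Deriv [bang A'] C := by
        apply Deriv.withR
        · apply Deriv.limpR
          exact Deriv.weak (derelict A')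
        · apply Deriv.limpR
          exact Deriv.exch (List.Perm.swap _ _ _)
            (Deriv.weak (falsum true false (by decide) B'))
      have h4 : Deriv ([A'].map bang) (bang C) := Deriv.bangR (by simpa using h3)
      have := cut1 h2 (by simpa using h4)
      simpa [matM, hC] using this
    | false =>
      set C := wth (limp (bang (beq false true)) A') (limp (bang (beq false false)) B') with hC
      have h1 : Deriv [C] B' := by
        have : Deriv [limp (bang (beq false false)) B'] B' := by
          have := Deriv.limpL (Γ := []) (Δ := []) (Deriv.axRefl false) (Deriv.id B')
          simpa using this
        exact Deriv.withL₂ this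
      have h2 : Deriv [C] (bang B') := cut1 h1 (ihB b)
      have h3 : Deriv [bang B'] C := by
        apply Deriv.withR
        · apply Deriv.limpR
          exact Deriv.exch (List.Perm.swap _ _ _)
            (Deriv.weak (falsum false true (by decide) A'))
        · apply Deriv.limpR
          exact Deriv.weak (derelict B')
      have h4 : Deriv ([B'].map bang) (bang C) := Deriv.bangR (by simpa using h3)
      have := cut1 h2 (by simpa using h4)
      simpa [matM, hC] using this
  | imp A B ihA ihB =>
    intro g
    set P := LFml.uni (Wm A) (fun y => limp (matM A y) (matM B (g y))) with hP
    have : Deriv ([P].map bang) (bang (bang P)) := Deriv.bangR (Deriv.id _)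
    simpa [matM, hP] using this
  | uni A ih =>
    intro f
    set P := LFml.uni D (fun d => matM (A d) (f d)) with hP
    have : Deriv ([P].map bang) (bang (bang P)) := Deriv.bangR (Deriv.id _)
    simpa [matM, hP] using this
  | exi A ih =>
    intro w
    exact ih w.1 w.2

end Stmt19Aux

/-- for the modified-realizability instantiation of the exponential, the
interpretation of the °-translation of every intuitionistic formula is self-banging:
||A°||ˣ ⊸⊸ !||A°||ˣ is derivable in ILLᵇ. -/
theorem stmt19 {D : Type} (A : IFml D) (x : Wm A) :
    Deriv [] (biimp (matM A x) (LFml.bang (matM A x))) := by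
  exact Deriv.withR (Deriv.limpR (Stmt19Aux.selfbang A x))
    (Deriv.limpR (Stmt19Aux.derelict _))
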